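/- arXiv:2006.16190 — 6 statements merged into one kernel-verified Lean document; each statement's English description precedes it below -/
import Mathlib

section
/- Let D=(V∪R,A) be a digraph in which every vertex r∈R has in-degree 0. Then there exists a set of pairwise arc-disjoint arborescences {B_r}_{r∈R}, where each B_r is rooted at r and spans V∪{r}, if and only if for every X⊆V∪R with X∩V≠∅ we have d_A^-(X) ≥ |R−X|, where d_A^-(X) is the number of arcs entering X. -/
/-!
Necessity: every root outside `X` reaches a vertex of `X ∩ V` in its own arborescence, so each
such root contributes its own arc entering `X`.

Sufficiency (Lovász): build the arborescences one root at a time. While growing the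
`r`-arborescence on the vertex set `S`, with `Q` the roots still to be served, keep in the
unused arcs the cut condition for the roots `Q` together with `S` contracted into one extra
root. Call a set tight if it is entered by no more unused arcs than there are roots of `Q`
outside it. An arc leaving `S` may be used whenever every tight set containing its head contains
its tail; by submodularity of the in-degree, tight sets are closed under intersection, and a
minimal tight set reaching outside `S` contains such an arc. Once `S ⊇ V` the invariant is the
cut condition for `Q`.
-/

open Set

/-- One step along an arc of `B` in the digraph given by tail/head maps. -/
def stepOn {α β : Type} (tl hd : β → α) (B : Set β) (u v : α) : Prop :=
  ∃ a ∈ B, tl a = u ∧ hd a = v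

/-- Reachability using only arcs of `B`. -/
def reachOn {α β : Type} (tl hd : β → α) (B : Set β) (u v : α) : Prop :=
  Relation.ReflTransGen (stepOn tl hd B) u v

/-- The vertex set of the arc set `B` together with the root `r`. -/
def vertsOf {α β : Type} (tl hd : β → α) (B : Set β) (r : α) : Set α :=
  insert r (tl '' B ∪ hd '' B)

/-- `B` is an `r`-arborescence: no arc enters the root, every other vertex of `B`
has exactly one entering arc, and every vertex of `B` is reachable from `r` in `B`. -/
noncomputable def IsArbor {α β : Type} (tl hd : β → α) (B : Set β) (r : α) : Prop :=
  (∀ a ∈ B, hd a ≠ r) ∧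
  (∀ v ∈ vertsOf tl hd B r, v ≠ r → {a ∈ B | hd a = v}.ncard = 1) ∧
  (∀ v ∈ vertsOf tl hd B r, reachOn tl hd B r v)

/-- Number of arcs entering the vertex set `X`. -/
noncomputable def dIn {α β : Type} (tl hd : β → α) (X : Set α) : ℕ :=
  {a : β | hd a ∈ X ∧ tl a ∉ X}.ncard

noncomputable def dInOn {α β : Type} (tl hd : β → α) (A : Set β) (X : Set α) : ℕ :=
  {a ∈ A | hd a ∈ X ∧ tl a ∉ X}.ncard

def CutCondition {α β : Type} (tl hd : β → α) (V : Set α) (A : Set β) (Q : Set α) : Prop :=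
  ∀ X : Set α, (X ∩ V).Nonempty → (Q \ X).ncard ≤ dInOn tl hd A X

def IsTight {α β : Type} (tl hd : β → α) (A : Set β) (Q X : Set α) : Prop :=
  dInOn tl hd A X ≤ (Q \ X).ncard

/-- Together with `CutCondition tl hd V A Q` this is the cut condition for the roots `Q ∪ {s}`
after the vertex set `S` of a partial arborescence has been contracted into a single root `s`. -/
def TightSetsMeet {α β : Type} (tl hd : β → α) (V : Set α) (A : Set β) (Q S : Set α) :
    Prop :=
  ∀ X : Set α, (X ∩ V).Nonempty → IsTight tl hd A Q X → (X ∩ S).Nonempty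

variable {α β : Type} {tl hd : β → α}

section Cuts

variable {V Q S X Y : Set α} {A : Set β}

lemma dInOn_univ (X : Set α) : dInOn tl hd univ X = dIn tl hd X := by
  simp [dInOn, dIn]

lemma dInOn_univ_right (A : Set β) : dInOn tl hd A univ = 0 := by
  simp [dInOn]

lemma dInOn_union_add_dInOn_inter_le [Finite β] (A : Set β) (X Y : Set α) :
    dInOn tl hd A (X ∪ Y) + dInOn tl hd A (X ∩ Y) ≤ dInOn tl hd A X + dInOn tl hd A Y := by
  simp only [dInOn]
  rw [← ncard_union_add_ncard_inter _ _ (toFinite _) (toFinite _),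
    ← ncard_union_add_ncard_inter {a ∈ A | hd a ∈ X ∧ tl a ∉ X} _ (toFinite _)
      (toFinite _)]
  exact add_le_add
    (ncard_le_ncard (by intro a; simp only [mem_union, mem_inter_iff, mem_ofPred_eq]; tauto))
    (ncard_le_ncard (by intro a; simp only [mem_union, mem_inter_iff, mem_ofPred_eq]; tauto))

lemma ncard_sdiff_union_add_ncard_sdiff_inter [Finite α] (Q X Y : Set α) :
    (Q \ (X ∪ Y)).ncard + (Q \ (X ∩ Y)).ncard = (Q \ X).ncard + (Q \ Y).ncard := by
  rw [← sdiff_inter_sdiff, sdiff_inter, add_comm,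
    ncard_union_add_ncard_inter _ _ (toFinite _) (toFinite _)]

lemma dInOn_le_dInOn_sdiff_singleton_add_one [Finite β] (A : Set β) (X : Set α) (a : β) :
    dInOn tl hd A X ≤ dInOn tl hd (A \ {a}) X + 1 :=
  calc dInOn tl hd A X ≤ (insert a {x ∈ A \ {a} | hd x ∈ X ∧ tl x ∉ X}).ncard :=
        ncard_le_ncard (fun x hx => by by_cases hxa : x = a <;> simp_all) (toFinite _)
    _ ≤ dInOn tl hd (A \ {a}) X + 1 := ncard_insert_le _ _

lemma dInOn_sdiff_singleton {a : β} (ha : ¬(hd a ∈ X ∧ tl a ∉ X)) :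
    dInOn tl hd (A \ {a}) X = dInOn tl hd A X := by
  unfold dInOn
  congr 1
  ext x
  by_cases hxa : x = a <;> simp_all [and_assoc]

lemma exists_arc_of_dInOn_lt_dInOn_sdiff [Finite β]
    (h : dInOn tl hd A X < dInOn tl hd A (X \ S)) :
    ∃ a ∈ A, tl a ∈ X ∩ S ∧ hd a ∈ X \ S := by
  by_contra! hno
  refine h.not_ge (ncard_le_ncard ?_ (toFinite _))
  rintro a ⟨haA, hhd, htl⟩
  refine ⟨haA, hhd.1, fun htX => hno a haA ⟨htX, ?_⟩ hhd⟩
  by_contra htS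
  exact htl ⟨htX, htS⟩

lemma CutCondition.mono_roots [Finite α] {Q' : Set α} (hcut : CutCondition tl hd V A Q')
    (hQ : Q ⊆ Q') :
    CutCondition tl hd V A Q :=
  fun X hX => (ncard_le_ncard (sdiff_subset_sdiff_left hQ) (toFinite _)).trans (hcut X hX)

lemma CutCondition.isTight_inter [Finite α] [Finite β] (hcut : CutCondition tl hd V A Q)
    (hX : IsTight tl hd A Q X) (hY : IsTight tl hd A Q Y) (hXY : ((X ∪ Y) ∩ V).Nonempty) :
    IsTight tl hd A Q (X ∩ Y) := by
  have hunion := hcut _ hXY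
  have hsub := dInOn_union_add_dInOn_inter_le (tl := tl) (hd := hd) A X Y
  have hmod := ncard_sdiff_union_add_ncard_sdiff_inter Q X Y
  unfold IsTight at *
  omega

lemma CutCondition.sdiff_singleton [Finite β] {a : β} (hcut : CutCondition tl hd V A Q)
    (hsafe : ∀ Y, IsTight tl hd A Q Y → hd a ∈ Y → tl a ∈ Y) :
    CutCondition tl hd V (A \ {a}) Q := by
  intro X hX
  by_cases hent : hd a ∈ X ∧ tl a ∉ X
  · have hslack : (Q \ X).ncard < dInOn tl hd A X :=
      lt_of_not_ge fun ht => hent.2 (hsafe X ht hent.1)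
    have := dInOn_le_dInOn_sdiff_singleton_add_one (tl := tl) (hd := hd) A X a
    omega
  · rw [dInOn_sdiff_singleton hent]
    exact hcut X hX

lemma TightSetsMeet.sdiff_singleton_insert {a : β} (hS : TightSetsMeet tl hd V A Q S) :
    TightSetsMeet tl hd V (A \ {a}) Q (insert (hd a) S) := by
  intro X hXV hXt
  by_cases hhX : hd a ∈ X
  · exact ⟨hd a, hhX, mem_insert _ _⟩
  · rw [IsTight, dInOn_sdiff_singleton (fun h => hhX h.1)] at hXt
    exact (hS X hXV hXt).mono (inter_subset_inter_right _ (subset_insert _ _))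

lemma CutCondition.tightSetsMeet_singleton [Finite α] {r : α}
    (hcut : CutCondition tl hd V A (insert r Q)) (hr : r ∉ Q) :
    TightSetsMeet tl hd V A Q {r} := by
  intro X hXV hXt
  by_contra hrX
  have hrX : r ∉ X := fun h => hrX ⟨r, h, rfl⟩
  have := hcut X hXV
  rw [insert_sdiff_of_notMem _ hrX, ncard_insert_of_notMem (fun h => hr h.1) (toFinite _)] at this
  exact absurd hXt (by unfold IsTight; omega)

lemma exists_safe_arc [Finite α] [Finite β] (hV : ∀ a, hd a ∈ V)
    (hcut : CutCondition tl hd V A Q) (hS : TightSetsMeet tl hd V A Q S) (hVS : ¬V ⊆ S) :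
    ∃ a ∈ A, tl a ∈ S ∧ hd a ∉ S ∧
      ∀ Y, IsTight tl hd A Q Y → hd a ∈ Y → tl a ∈ Y := by
  -- `X` is a minimal tight set with a vertex of `V \ S` (`univ` is one); the strict cut
  -- condition at `X \ S` yields an arc from `X ∩ S` into `X \ S`, and a tight `Y` separating
  -- its head from its tail would make `X ∩ Y` a smaller such set
  obtain ⟨X, ⟨hXt, hXV⟩, hXmin⟩ : ∃ X, Minimal
      (fun X => IsTight tl hd A Q X ∧ ((X \ S) ∩ V).Nonempty) X := by
    refine exists_minimal_of_wellFoundedLT _ ⟨univ, ?_, ?_⟩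
    · simp [IsTight, dInOn_univ_right]
    · obtain ⟨v, hvV, hvS⟩ := not_subset.1 hVS
      exact ⟨v, ⟨mem_univ v, hvS⟩, hvV⟩
  have hlt : dInOn tl hd A X < dInOn tl hd A (X \ S) :=
    calc dInOn tl hd A X ≤ (Q \ X).ncard := hXt
      _ ≤ (Q \ (X \ S)).ncard :=
        ncard_le_ncard (sdiff_subset_sdiff_right sdiff_subset) (toFinite _)
      _ < dInOn tl hd A (X \ S) := lt_of_not_ge fun ht => by
          obtain ⟨v, hvX, hvS⟩ := hS _ hXV ht
          exact hvX.2 hvS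
  obtain ⟨a, haA, ⟨htX, htS⟩, hhX, hhS⟩ := exists_arc_of_dInOn_lt_dInOn_sdiff hlt
  refine ⟨a, haA, htS, hhS, fun Y hYt hhY => ?_⟩
  have hXY := hcut.isTight_inter hXt hYt ⟨hd a, Or.inl hhX, hV a⟩
  exact (hXmin ⟨hXY, hd a, ⟨⟨hhX, hhY⟩, hhS⟩, hV a⟩ inter_subset_left htX).2

end Cuts

section Arborescences

variable {B : Set β} {a : β} {r u v : α}

lemma reachOn_mono {B' : Set β} (h : B ⊆ B') (hr : reachOn tl hd B u v) :
    reachOn tl hd B' u v :=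
  Relation.ReflTransGen.mono (fun _ _ ⟨a, ha, h1, h2⟩ => ⟨a, h ha, h1, h2⟩) _ _ hr

lemma exists_arc_entering_of_reachOn {X : Set α} (hr : reachOn tl hd B u v) (hu : u ∉ X)
    (hv : v ∈ X) : ∃ a ∈ B, hd a ∈ X ∧ tl a ∉ X := by
  induction hr with
  | refl => exact absurd hv hu
  | @tail w x _ hwx ih =>
    by_cases hw : w ∈ X
    · exact ih hw
    · obtain ⟨a, ha, rfl, rfl⟩ := hwx
      exact ⟨a, ha, hv, hw⟩

lemma vertsOf_empty : vertsOf tl hd ∅ r = {r} := by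
  simp [vertsOf]

lemma isArbor_empty : IsArbor tl hd ∅ r := by
  refine ⟨by simp, by simp [vertsOf_empty], ?_⟩
  rw [vertsOf_empty]
  rintro v rfl
  exact Relation.ReflTransGen.refl

lemma vertsOf_insert (ht : tl a ∈ vertsOf tl hd B r) :
    vertsOf tl hd (insert a B) r = insert (hd a) (vertsOf tl hd B r) := by
  unfold vertsOf at *
  rw [image_insert_eq, image_insert_eq]
  ext x
  simp only [mem_insert_iff, mem_union] at ht ⊢
  constructor
  · rintro (h | (rfl | h) | (h | h)) <;> tauto
  · tauto

lemma IsArbor.insert (hB : IsArbor tl hd B r) (ht : tl a ∈ vertsOf tl hd B r)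
    (hh : hd a ∉ vertsOf tl hd B r) : IsArbor tl hd (insert a B) r := by
  obtain ⟨hroot, hunique, hreach⟩ := hB
  have hhB : ∀ x ∈ B, hd x ≠ hd a := fun x hx h =>
    hh (h ▸ mem_insert_of_mem _ (Or.inr ⟨x, hx, rfl⟩))
  refine ⟨?_, ?_, ?_⟩
  · rintro x (rfl | hx)
    · exact fun h => hh (h ▸ mem_insert _ _)
    · exact hroot x hx
  · rw [vertsOf_insert ht]
    rintro v (rfl | hv) hvr
    · convert ncard_singleton a
      ext x
      constructor
      · rintro ⟨rfl | hx, hxv⟩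
        · rfl
        · exact absurd hxv (hhB x hx)
      · rintro rfl
        exact ⟨mem_insert _ _, rfl⟩
    · convert hunique v hv hvr using 2
      ext x
      constructor
      · rintro ⟨rfl | hx, rfl⟩
        · exact absurd hv hh
        · exact ⟨hx, rfl⟩
      · exact fun ⟨hx, hxv⟩ => ⟨mem_insert_of_mem _ hx, hxv⟩
  · rw [vertsOf_insert ht]
    rintro v (rfl | hv)
    · exact (reachOn_mono (subset_insert a B) (hreach _ ht)).tail ⟨a, mem_insert a B, rfl, rfl⟩
    · exact reachOn_mono (subset_insert a B) (hreach v hv)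

end Arborescences

section Packing

variable {V : Set α}

lemma exists_spanning_arborescence_of_partial [Finite α] [Finite β] (hV : ∀ a, hd a ∈ V)
    {A F : Set β} {r : α} {Q : Set α} (hFA : F ⊆ A) (hF : IsArbor tl hd F r)
    (hFV : vertsOf tl hd F r ⊆ V ∪ {r}) (hcut : CutCondition tl hd V (A \ F) Q)
    (hS : TightSetsMeet tl hd V (A \ F) Q (vertsOf tl hd F r)) :
    ∃ F' ⊆ A, IsArbor tl hd F' r ∧ vertsOf tl hd F' r = V ∪ {r} ∧
      CutCondition tl hd V (A \ F') Q := by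
  induction hn : (V \ vertsOf tl hd F r).ncard using Nat.strong_induction_on generalizing F with
  | _ n ih =>
  by_cases hVS : V ⊆ vertsOf tl hd F r
  · exact ⟨F, hFA, hF, hFV.antisymm (union_subset hVS (singleton_subset_iff.2 (mem_insert _ _))),
      hcut⟩
  obtain ⟨a, ⟨haA, -⟩, ht, hh, hsafe⟩ := exists_safe_arc hV hcut hS hVS
  have hdiff : A \ insert a F = (A \ F) \ {a} := by
    rw [insert_eq, union_comm, sdiff_sdiff]
  have hverts := vertsOf_insert ht
  refine ih _ ?_ (insert_subset haA hFA) (hF.insert ht hh) ?_ ?_ ?_ rfl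
  · rw [← hn, hverts, insert_eq, union_comm, ← sdiff_sdiff]
    exact ncard_sdiff_singleton_lt_of_mem ⟨hV a, hh⟩
  · rw [hverts]
    exact insert_subset (Or.inl (hV a)) hFV
  · rw [hdiff]
    exact hcut.sdiff_singleton hsafe
  · rw [hdiff, hverts]
    exact hS.sdiff_singleton_insert

lemma exists_arborescence_packing [Finite α] [Finite β] (hV : ∀ a, hd a ∈ V) (R : Set α) :
    ∀ A : Set β, CutCondition tl hd V A R → ∃ B : α → Set β, R.PairwiseDisjoint B ∧
      ∀ r ∈ R, B r ⊆ A ∧ IsArbor tl hd (B r) r ∧ vertsOf tl hd (B r) r = V ∪ {r} := by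
  classical
  induction R, R.toFinite using Set.Finite.induction_on with
  | empty => exact fun A _ => ⟨fun _ => ∅, pairwiseDisjoint_empty, by simp⟩
  | @insert r R hr _ ih =>
    intro A hcut
    obtain ⟨F, hFA, hF, hFV, hcutF⟩ := exists_spanning_arborescence_of_partial hV
      (empty_subset A) isArbor_empty (by simp [vertsOf_empty])
      (by rw [sdiff_empty]; exact hcut.mono_roots (subset_insert r R))
      (by rw [sdiff_empty, vertsOf_empty]; exact hcut.tightSetsMeet_singleton hr)
    obtain ⟨B, hBdisj, hB⟩ := ih (A \ F) hcutF
    have hBr : ∀ j ∈ R, Function.update B r F j = B j :=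
      fun j hj => Function.update_of_ne (ne_of_mem_of_not_mem hj hr) _ _
    refine ⟨Function.update B r F, ?_, forall_mem_insert.2 ⟨?_, fun j hj => ?_⟩⟩
    · refine (hBdisj.mono_on fun j hj => (hBr j hj).le).insert_of_notMem hr fun j hj => ?_
      rw [hBr j hj, Function.update_self]
      exact disjoint_sdiff_right.mono_right (hB j hj).1
    · rw [Function.update_self]
      exact ⟨hFA, hF, hFV⟩
    · rw [hBr j hj]
      exact ⟨(hB j hj).1.trans sdiff_subset, (hB j hj).2⟩

lemma ncard_sdiff_le_dIn_of_reachOn [Finite β] {B : α → Set β} {R X : Set α}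
    (hB : R.PairwiseDisjoint B) (hreach : ∀ r ∈ R, ∀ v ∈ V, reachOn tl hd (B r) r v)
    (hX : (X ∩ V).Nonempty) : (R \ X).ncard ≤ dIn tl hd X := by
  obtain ⟨v, hvX, hvV⟩ := hX
  have hcross : ∀ r : ↥(R \ X), ∃ a : ↥{a | hd a ∈ X ∧ tl a ∉ X}, a.1 ∈ B r := by
    rintro ⟨r, hrR, hrX⟩
    obtain ⟨a, haB, hh, ht⟩ := exists_arc_entering_of_reachOn (hreach r hrR v hvV) hrX hvX
    exact ⟨⟨a, hh, ht⟩, haB⟩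
  choose f hf using hcross
  rw [dIn, ← Nat.card_coe_set_eq, ← Nat.card_coe_set_eq]
  refine Nat.card_le_card_of_injective f fun r r' hrr' => Subtype.ext (by_contra fun hne => ?_)
  exact disjoint_left.1 (hB r.2.1 r'.2.1 hne) (hf r) (hrr' ▸ hf r')

end Packing

theorem edmonds_packing_spanning_arborescences_general
    {α β : Type} [Fintype α] [Fintype β]
    (V R : Set α) (tl hd : β → α)
    (hpart : V ∪ R = Set.univ)
    (hroot : ∀ a : β, hd a ∉ R) :
    (∃ B : α → Set β,
      (∀ r ∈ R, ∀ r' ∈ R, r ≠ r' → Disjoint (B r) (B r')) ∧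
      (∀ r ∈ R, IsArbor tl hd (B r) r ∧ vertsOf tl hd (B r) r = V ∪ {r}))
    ↔ (∀ X : Set α, (X ∩ V).Nonempty → dIn tl hd X ≥ (R \ X).ncard) := by
  constructor
  · rintro ⟨B, hBdisj, hB⟩ X hX
    refine ncard_sdiff_le_dIn_of_reachOn hBdisj (fun r hr v hv => ?_) hX
    exact (hB r hr).1.2.2 v ((hB r hr).2 ▸ Or.inl hv)
  · intro hcut
    have hV : ∀ a, hd a ∈ V := fun a =>
      (show hd a ∈ V ∪ R from hpart ▸ mem_univ _).resolve_right (hroot a)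
    obtain ⟨B, hBdisj, hB⟩ := exists_arborescence_packing hV R univ fun X hX => by
      rw [dInOn_univ]
      exact hcut X hX
    exact ⟨B, hBdisj, fun r hr => (hB r hr).2⟩

/-- Edmonds' theorem on packing spanning arborescences with prescribed roots. -/
theorem edmonds_packing_spanning_arborescences
    {α β : Type} [Fintype α] [Fintype β]
    (V R : Set α) (tl hd : β → α)
    (hpart : V ∪ R = Set.univ) (hdisj : Disjoint V R)
    (hroot : ∀ a : β, hd a ∉ R) :
    (∃ B : α → Set β,
      (∀ r ∈ R, ∀ r' ∈ R, r ≠ r' → Disjoint (B r) (B r')) ∧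
      (∀ r ∈ R, IsArbor tl hd (B r) r ∧ vertsOf tl hd (B r) r = V ∪ {r}))
    ↔ (∀ X : Set α, (X ∩ V).Nonempty → dIn tl hd X ≥ (R \ X).ncard) :=
  edmonds_packing_spanning_arborescences_general V R tl hd hpart hroot
end

section
/- Let D=(V∪R,A) be a rooted digraph, {B_r}_{r∈R} a packing of reachability r-arborescences in D, and X⊆V∪R with X∩V≠∅. Then d_A^-(X) ≥ |P_X^D ∩ R| − |X ∩ R|. (Necessity direction of the Kamiyama–Katoh–Takizawa theorem.) -/
open Set

/-- Reachability in the whole digraph. -/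
def reaches {α β : Type} (tl hd : β → α) (u v : α) : Prop :=
  reachOn tl hd Set.univ u v

/-- `P_X^D`: the set of vertices from which some vertex of `X` is reachable. -/
def Pset {α β : Type} (tl hd : β → α) (X : Set α) : Set α :=
  {v | ∃ x ∈ X, reaches tl hd v x}

lemma crossing_of_reach {α β : Type} (tl hd : β → α) (B : Set β) (X : Set α)
    {u v : α} (h : reachOn tl hd B u v) (hu : u ∉ X) (hv : v ∈ X) :
    ∃ a ∈ B, hd a ∈ X ∧ tl a ∉ X := by
  induction h with
  | refl => exact absurd hv hu
  | tail _ step ih =>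
    rename_i b c _
    by_cases hb : b ∈ X
    · exact ih hb
    · obtain ⟨a, haB, hta, hha⟩ := step
      exact ⟨a, haB, hha ▸ hv, hta ▸ hb⟩

/-- Necessity direction of the Kamiyama–Katoh–Takizawa theorem. -/
theorem kkt_necessity
    {α β : Type} [Fintype α] [Fintype β]
    (V R : Set α) (tl hd : β → α)
    (hpart : V ∪ R = Set.univ) (hdisj : Disjoint V R)
    (hroot : ∀ a : β, hd a ∉ R)
    (B : α → Set β)
    (hdisjB : ∀ r ∈ R, ∀ r' ∈ R, r ≠ r' → Disjoint (B r) (B r'))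
    (harb : ∀ r ∈ R, IsArbor tl hd (B r) r ∧
      vertsOf tl hd (B r) r = {v | reaches tl hd r v})
    (X : Set α) (hX : (X ∩ V).Nonempty) :
    (dIn tl hd X : ℤ) ≥ ((Pset tl hd X ∩ R).ncard : ℤ) - ((X ∩ R).ncard : ℤ) := by
  set C : Set β := {a : β | hd a ∈ X ∧ tl a ∉ X} with hC
  set S : Set α := (Pset tl hd X ∩ R) \ X with hS
  have hexists : ∀ r ∈ S, ∃ a, a ∈ B r ∧ a ∈ C := by
    intro r hr
    obtain ⟨⟨⟨x, hxX, hrx⟩, hrR⟩, hrX⟩ := hr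
    have harbr := (harb r hrR)
    have hxv : x ∈ vertsOf tl hd (B r) r := by
      rw [harbr.2]; exact hrx
    have hreach : reachOn tl hd (B r) r x := harbr.1.2.2 x hxv
    obtain ⟨a, haB, hh, ht⟩ := crossing_of_reach tl hd (B r) X hreach hrX hxX
    exact ⟨a, haB, hh, ht⟩
  have hSC : S.ncard ≤ C.ncard := by
    rcases isEmpty_or_nonempty β with hβ | hβ
    · have : S = ∅ := by
        ext r; simp only [Set.mem_empty_iff_false, iff_false]
        intro hr
        obtain ⟨a, -, -⟩ := hexists r hr
        exact hβ.false a
      simp [this]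
    · inhabit β
      choose! f hf1 hf2 using hexists
      apply Set.ncard_le_ncard_of_injOn f (fun r hr => hf2 r hr) _ (Set.toFinite C)
      intro r hr r' hr' heq
      by_contra hne
      have hd := hdisjB r hr.1.2 r' hr'.1.2 hne
      exact hd.ne_of_mem (hf1 r hr) (hf1 r' hr') heq
  have hsub : Pset tl hd X ∩ R ⊆ S ∪ (X ∩ R) := by
    intro r hr
    by_cases hrX : r ∈ X
    · exact Or.inr ⟨hrX, hr.2⟩
    · exact Or.inl ⟨hr, hrX⟩
  have h1 : (Pset tl hd X ∩ R).ncard ≤ S.ncard + (X ∩ R).ncard :=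
    le_trans (Set.ncard_le_ncard hsub (Set.toFinite _)) (Set.ncard_union_le _ _)
  have h2 : S.ncard ≤ dIn tl hd X := hSC
  have := le_trans h1 (Nat.add_le_add_right h2 _)
  push_cast [dIn] at *
  omega
end

section
/- Let (D=(V∪R,A), M) be a matroid-rooted digraph, {B_r}_{r∈R} a matroid-reachability-based packing of arborescences in (D,M), and X⊆V∪R with X∩V≠∅. Then d_A^-(X) ≥ r_M(P_X^D∩R) − r_M(X∩R). -/
open Set

/-- A matroid given by its rank function. -/
structure RankFn (α : Type) where
  rk : Set α → ℕ
  rk_empty : rk ∅ = 0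
  subcard : ∀ X : Set α, X.Finite → rk X ≤ X.ncard
  mono : ∀ X Y : Set α, X ⊆ Y → rk X ≤ rk Y
  submod : ∀ X Y : Set α, rk (X ∪ Y) + rk (X ∩ Y) ≤ rk X + rk Y
  unit : ∀ (X : Set α) (y : α), rk (insert y X) ≤ rk X + 1

/-- `B` is a basis of `X` in the matroid `M`. -/
def IsBasisOf {α : Type} (M : RankFn α) (B X : Set α) : Prop :=
  B ⊆ X ∧ B.ncard = M.rk B ∧ M.rk B = M.rk X

/-!
Let `T` be the set of roots `r ∉ X` whose arborescence enters `X`. The arborescences are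
arc-disjoint, so distinct roots of `T` use distinct arcs entering `X`, and `|T| ≤ d⁻(X)`.
If `x ∈ X ∩ V`, every root whose arborescence contains `x` lies in `X ∩ R` or in `T`, and
these roots form a basis of `P_x ∩ R`; if `x ∈ X ∩ R`, then `P_x ∩ R = {x}` because no arc
enters a root. Hence `(X ∩ R) ∪ T` spans `P_X ∩ R`, and
`r(P_X ∩ R) ≤ r((X ∩ R) ∪ T) ≤ r(X ∩ R) + |T| ≤ r(X ∩ R) + d⁻(X)`.
-/

namespace RankFn

variable {α : Type} (M : RankFn α)

lemma rk_insert_eq_of_subset {F S : Set α} {y : α} (hFS : F ⊆ S)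
    (hy : M.rk (insert y F) = M.rk F) : M.rk (insert y S) = M.rk S := by
  have hsub := M.submod S (insert y F)
  rw [show S ∪ insert y F = insert y S by
    rw [union_insert, union_eq_self_of_subset_right hFS]] at hsub
  have hF : M.rk F ≤ M.rk (S ∩ insert y F) :=
    M.mono _ _ (subset_inter hFS (subset_insert _ _))
  have hS : M.rk S ≤ M.rk (insert y S) := M.mono _ _ (subset_insert _ _)
  omega

lemma rk_insert_eq_of_isBasisOf {F Y : Set α} {y : α} (hF : IsBasisOf M F Y) (hy : y ∈ Y) :
    M.rk (insert y F) = M.rk F :=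
  le_antisymm (hF.2.2 ▸ M.mono _ _ (insert_subset hy hF.1)) (M.mono _ _ (subset_insert _ _))

lemma rk_union_le_add_ncard (S : Set α) {T : Set α} (hT : T.Finite) :
    M.rk (S ∪ T) ≤ M.rk S + T.ncard := by
  induction T, hT using Set.Finite.induction_on with
  | empty => simp
  | @insert a T ha hT ih =>
    have h := M.unit (S ∪ T) a
    rw [union_insert, ncard_insert_of_notMem ha hT]
    omega

lemma rk_union_eq_of_forall_rk_insert_eq (S : Set α) {Y : Set α} (hY : Y.Finite)
    (h : ∀ y ∈ Y, M.rk (insert y S) = M.rk S) : M.rk (S ∪ Y) = M.rk S := by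
  refine Set.Finite.induction_on_subset (motive := fun Z _ => M.rk (S ∪ Z) = M.rk S) Y hY
    (by simp) fun haY _ _ ih => ?_
  rw [union_insert, M.rk_insert_eq_of_subset subset_union_left (h _ haY), ih]

end RankFn

section Digraph

variable {α β : Type} (tl hd : β → α)

lemma reachOn.exists_arc_entering {B : Set β} {X : Set α} {u v : α}
    (h : reachOn tl hd B u v) (hu : u ∉ X) (hv : v ∈ X) :
    ∃ a ∈ B, hd a ∈ X ∧ tl a ∉ X := by
  induction h with
  | refl => exact absurd hv hu
  | @tail w v _ hwv ih =>
    by_cases hw : w ∈ X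
    · exact ih hw
    · obtain ⟨a, haB, rfl, rfl⟩ := hwv
      exact ⟨a, haB, hv, hw⟩

lemma reaches.eq_of_forall_hd_notMem {R : Set α} (hroot : ∀ a : β, hd a ∉ R) {u v : α}
    (h : reaches tl hd u v) (hv : v ∈ R) : u = v := by
  induction h with
  | refl => rfl
  | tail _ hwv =>
    obtain ⟨a, -, -, rfl⟩ := hwv
    exact absurd hv (hroot a)

def enteringRoots (B : α → Set β) (R X : Set α) : Set α :=
  {r ∈ R | r ∉ X ∧ ∃ a ∈ B r, hd a ∈ X ∧ tl a ∉ X}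

lemma ncard_enteringRoots_le_dIn [Finite β] (B : α → Set β) {R : Set α}
    (hdisjB : ∀ r ∈ R, ∀ r' ∈ R, r ≠ r' → Disjoint (B r) (B r')) (X : Set α) :
    (enteringRoots tl hd B R X).ncard ≤ dIn tl hd X := by
  rcases isEmpty_or_nonempty β with hβ | hβ
  · have : enteringRoots tl hd B R X = ∅ :=
      eq_empty_of_forall_notMem fun r ⟨_, _, a, _⟩ => hβ.elim a
    simp [this]
  have hex : ∀ r ∈ enteringRoots tl hd B R X, ∃ a ∈ B r, hd a ∈ X ∧ tl a ∉ X :=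
    fun r hr => hr.2.2
  choose! f hfB hf using hex
  refine ncard_le_ncard_of_injOn f hf (fun r hr r' hr' hrr' => ?_) (toFinite _)
  by_contra hne
  exact disjoint_left.mp (hdisjB r hr.1 r' hr'.1 hne) (hfB r hr) (hrr' ▸ hfB r' hr')

lemma subset_union_enteringRoots {B : α → Set β} {R X : Set α}
    (harb : ∀ r ∈ R, IsArbor tl hd (B r) r) {x : α} (hx : x ∈ X) :
    {r ∈ R | x ∈ vertsOf tl hd (B r) r} ⊆ (X ∩ R) ∪ enteringRoots tl hd B R X := by
  rintro r ⟨hrR, hxr⟩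
  by_cases hrX : r ∈ X
  · exact Or.inl ⟨hrX, hrR⟩
  · exact Or.inr ⟨hrR, hrX, ((harb r hrR).2.2 x hxr).exists_arc_entering tl hd hrX hx⟩

end Digraph

theorem matroid_reachability_necessity_general
    {α β : Type} [Fintype α] [Fintype β]
    (V R : Set α) (tl hd : β → α)
    (hpart : V ∪ R = Set.univ)
    (hroot : ∀ a : β, hd a ∉ R)
    (M : RankFn α)
    (B : α → Set β)
    (hdisjB : ∀ r ∈ R, ∀ r' ∈ R, r ≠ r' → Disjoint (B r) (B r'))
    (harb : ∀ r ∈ R, IsArbor tl hd (B r) r)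
    (hbasis : ∀ v ∈ V, IsBasisOf M {r ∈ R | v ∈ vertsOf tl hd (B r) r}
      (Pset tl hd {v} ∩ R))
    (X : Set α) :
    (dIn tl hd X : ℤ) ≥ (M.rk (Pset tl hd X ∩ R) : ℤ) - (M.rk (X ∩ R) : ℤ) := by
  set T := enteringRoots tl hd B R X
  have hspan : ∀ y ∈ Pset tl hd X ∩ R, M.rk (insert y ((X ∩ R) ∪ T)) = M.rk ((X ∩ R) ∪ T) := by
    rintro y ⟨⟨x, hxX, hyx⟩, hyR⟩
    rcases (hpart.symm ▸ mem_univ x : x ∈ V ∪ R) with hxV | hxR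
    · exact M.rk_insert_eq_of_subset (subset_union_enteringRoots tl hd harb hxX)
        (M.rk_insert_eq_of_isBasisOf (hbasis x hxV) ⟨⟨x, rfl, hyx⟩, hyR⟩)
    · obtain rfl := hyx.eq_of_forall_hd_notMem tl hd hroot hxR
      rw [insert_eq_of_mem (show y ∈ (X ∩ R) ∪ T from Or.inl ⟨hxX, hyR⟩)]
  have hP : M.rk (Pset tl hd X ∩ R) ≤ M.rk ((X ∩ R) ∪ T) :=
    (M.mono _ _ subset_union_right).trans
      (M.rk_union_eq_of_forall_rk_insert_eq _ (toFinite _) hspan).le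
  have hS := M.rk_union_le_add_ncard (X ∩ R) (toFinite T)
  have hT : T.ncard ≤ dIn tl hd X := ncard_enteringRoots_le_dIn tl hd B hdisjB X
  omega

/-- Necessity direction of Király's theorem. -/
theorem matroid_reachability_necessity
    {α β : Type} [Fintype α] [Fintype β]
    (V R : Set α) (tl hd : β → α)
    (hpart : V ∪ R = Set.univ) (hdisj : Disjoint V R)
    (hroot : ∀ a : β, hd a ∉ R)
    (M : RankFn α)
    (B : α → Set β)
    (hdisjB : ∀ r ∈ R, ∀ r' ∈ R, r ≠ r' → Disjoint (B r) (B r'))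
    (harb : ∀ r ∈ R, IsArbor tl hd (B r) r)
    (hbasis : ∀ v ∈ V, IsBasisOf M {r ∈ R | v ∈ vertsOf tl hd (B r) r}
      (Pset tl hd {v} ∩ R))
    (X : Set α) (hX : (X ∩ V).Nonempty) :
    (dIn tl hd X : ℤ) ≥ (M.rk (Pset tl hd X ∩ R) : ℤ) - (M.rk (X ∩ R) : ℤ) :=
  matroid_reachability_necessity_general V R tl hd hpart hroot M B hdisjB harb hbasis X
end

section
/- Let (H=(V∪R, A∪E), M=(R,r_M)) be a simply matroid-rooted mixed hypergraph. Define b(X) = r_M(R)·(|V_X|−1) + r_M(R_X) for every X ⊆ A∪E, where V_X is the set of vertices of V incident to some (hyper- or dyper-)edge of X and R_X is the set of vertices of R incident to some dyperedge of X. Then b is submodular on 2^{A∪E}: b(Y)+b(Z) ≥ b(Y∪Z)+b(Y∩Z) for all Y,Z ⊆ A∪E. -/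
open Set

/-- Vertices incident to an edge of a mixed hypergraph (dyperedges are `Sum.inl`,
hyperedges are `Sum.inr`). -/
def incVerts {α δ ε : Type} (hdD : δ → α) (tlD : δ → Set α) (vE : ε → Set α) :
    δ ⊕ ε → Set α
  | Sum.inl a => insert (hdD a) (tlD a)
  | Sum.inr e => vE e

/-- `V_X`: vertices of `V` incident to some edge of `X`. -/
def VXset {α δ ε : Type} (hdD : δ → α) (tlD : δ → Set α) (vE : ε → Set α)
    (V : Set α) (X : Set (δ ⊕ ε)) : Set α :=
  V ∩ ⋃ x ∈ X, incVerts hdD tlD vE x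

/-- `R_X`: vertices of `R` incident to some dyperedge of `X`. -/
def RXset {α δ ε : Type} (hdD : δ → α) (tlD : δ → Set α)
    (R : Set α) (X : Set (δ ⊕ ε)) : Set α :=
  R ∩ ⋃ a ∈ {a : δ | Sum.inl a ∈ X}, insert (hdD a) (tlD a)

/-- The Tanigawa function `b(X) = r_M(R)(|V_X|−1) + r_M(R_X)`. -/
noncomputable def bTan {α δ ε : Type} (hdD : δ → α) (tlD : δ → Set α)
    (vE : ε → Set α) (V R : Set α) (M : RankFn α) (X : Set (δ ⊕ ε)) : ℤ :=
  (M.rk R : ℤ) * (((VXset hdD tlD vE V X).ncard : ℤ) - 1)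
    + (M.rk (RXset hdD tlD R X) : ℤ)

/-- The Tanigawa function of a simply matroid-rooted mixed hypergraph is
submodular. -/
theorem bTan_submodular
    {α δ ε : Type} [Fintype α] [Fintype δ] [Fintype ε]
    (V R : Set α) (hdD : δ → α) (tlD : δ → Set α) (vE : ε → Set α)
    (hpart : V ∪ R = Set.univ) (hdisj : Disjoint V R)
    (htail : ∀ a : δ, (tlD a).Nonempty)
    (hheadtail : ∀ a : δ, hdD a ∉ tlD a)
    (hhyp2 : ∀ e : ε, 2 ≤ (vE e).ncard)
    (hrootA : ∀ a : δ, hdD a ∉ R)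
    (hrootE : ∀ e : ε, vE e ∩ R = ∅)
    (hleave : ∀ a : δ, ∀ r ∈ R, r ∈ tlD a → tlD a = {r})
    (hsimple : ∀ r ∈ R, {a : δ | r ∈ tlD a}.ncard ≤ 1)
    (M : RankFn α) :
    ∀ Y Z : Set (δ ⊕ ε),
      bTan hdD tlD vE V R M (Y ∪ Z) + bTan hdD tlD vE V R M (Y ∩ Z)
        ≤ bTan hdD tlD vE V R M Y + bTan hdD tlD vE V R M Z := by

  intro Y Z
  classical
  -- V-set facts
  have hVunion : VXset hdD tlD vE V (Y ∪ Z) = VXset hdD tlD vE V Y ∪ VXset hdD tlD vE V Z := by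
    simp only [VXset, Set.biUnion_union, Set.inter_union_distrib_left]
  have hVinter : VXset hdD tlD vE V (Y ∩ Z) ⊆ VXset hdD tlD vE V Y ∩ VXset hdD tlD vE V Z := by
    intro v hv
    obtain ⟨hvV, hv2⟩ := hv
    simp only [Set.mem_iUnion] at hv2
    obtain ⟨x, hx, hvx⟩ := hv2
    exact ⟨⟨hvV, Set.mem_iUnion₂.2 ⟨x, hx.1, hvx⟩⟩, ⟨hvV, Set.mem_iUnion₂.2 ⟨x, hx.2, hvx⟩⟩⟩
  -- R-set facts
  have hRunion : RXset hdD tlD R (Y ∪ Z) = RXset hdD tlD R Y ∪ RXset hdD tlD R Z := by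
    have : {a : δ | Sum.inl a ∈ Y ∪ Z} = {a : δ | Sum.inl a ∈ Y} ∪ {a : δ | Sum.inl a ∈ Z} := by
      ext a; simp [Set.mem_union]
    simp only [RXset, this, Set.biUnion_union, Set.inter_union_distrib_left]
  have hRinter : RXset hdD tlD R (Y ∩ Z) ⊆ RXset hdD tlD R Y ∩ RXset hdD tlD R Z := by
    intro v hv
    obtain ⟨hvR, hv2⟩ := hv
    simp only [Set.mem_iUnion] at hv2
    obtain ⟨a, ha, hva⟩ := hv2
    exact ⟨⟨hvR, Set.mem_iUnion₂.2 ⟨a, ha.1, hva⟩⟩, ⟨hvR, Set.mem_iUnion₂.2 ⟨a, ha.2, hva⟩⟩⟩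
  -- cardinality submodularity for V-sets
  set VY := VXset hdD tlD vE V Y
  set VZ := VXset hdD tlD vE V Z
  have hfin : ∀ S : Set α, S.Finite := fun S => S.toFinite
  have hcard : (VXset hdD tlD vE V (Y ∪ Z)).ncard + (VXset hdD tlD vE V (Y ∩ Z)).ncard
      ≤ VY.ncard + VZ.ncard := by
    have h1 : (VXset hdD tlD vE V (Y ∩ Z)).ncard ≤ (VY ∩ VZ).ncard :=
      Set.ncard_le_ncard hVinter (hfin _)
    have h2 : (VY ∪ VZ).ncard + (VY ∩ VZ).ncard = VY.ncard + VZ.ncard :=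
      Set.ncard_union_add_ncard_inter VY VZ (hfin _) (hfin _)
    rw [hVunion]
    omega
  -- rank submodularity for R-sets
  have hrk : M.rk (RXset hdD tlD R (Y ∪ Z)) + M.rk (RXset hdD tlD R (Y ∩ Z))
      ≤ M.rk (RXset hdD tlD R Y) + M.rk (RXset hdD tlD R Z) := by
    have h1 : M.rk (RXset hdD tlD R (Y ∩ Z)) ≤ M.rk (RXset hdD tlD R Y ∩ RXset hdD tlD R Z) :=
      M.mono _ _ hRinter
    have h2 := M.submod (RXset hdD tlD R Y) (RXset hdD tlD R Z)
    rw [hRunion]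
    omega
  -- combine
  unfold bTan
  have hrR : (0 : ℤ) ≤ (M.rk R : ℤ) := Int.ofNat_nonneg _
  have hcard' : ((VXset hdD tlD vE V (Y ∪ Z)).ncard : ℤ) + ((VXset hdD tlD vE V (Y ∩ Z)).ncard : ℤ)
      ≤ (VY.ncard : ℤ) + (VZ.ncard : ℤ) := by exact_mod_cast hcard
  have hrk' : (M.rk (RXset hdD tlD R (Y ∪ Z)) : ℤ) + (M.rk (RXset hdD tlD R (Y ∩ Z)) : ℤ)
      ≤ (M.rk (RXset hdD tlD R Y) : ℤ) + (M.rk (RXset hdD tlD R Z) : ℤ) := by exact_mod_cast hrk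
  nlinarith [hrR, hcard', hrk']
end

section
/- Let S be a finite set and b: 2^S → ℤ an integer-valued, monotone, submodular function with b(X) ≥ 0 for all nonempty X ⊆ S. Then the family I_b = { X ⊆ S : b(Y) ≥ |Y| for all nonempty Y ⊆ X } is the family of independent sets of a matroid on S. -/
/-!
Suppose no `y ∈ X' \ X` can be added to the independent set `X`. Then each such `y` has a
blocker, a nonempty `A ⊆ X` with `b (insert y A) ≤ |A|`, and such an `A` is tight: `b A = |A|`.
By submodularity a blocker of `y` absorbs every tight subset of `X` it meets, so the largest
blockers `M y` are pairwise equal or disjoint. Submodularity again gives `b (M ∪ K) ≤ |M|` for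
each class `K = {y | M y = M}`; as `(M ∩ X') ∪ K ⊆ X'` is independent, `|K| ≤ |M \ X'|`.
Summing over the classes, `|X' \ X| ≤ |X \ X'|`.
-/

open Set

variable {α : Type*} {b : Set α → ℤ} {X X' A B C K : Set α} {y : α}

theorem Set.ncard_le_ncard_biUnion_sdiff_of_fiber_le [Finite α] {ι : Type*} {T : Set ι}
    (hT : T.Finite) {M : ι → Set α} (D : Set α) (hdisj : (M '' T).PairwiseDisjoint id)
    (hfib : ∀ y ∈ T, {z ∈ T | M z = M y}.ncard ≤ (M y \ D).ncard) :
    T.ncard ≤ ((⋃ y ∈ T, M y) \ D).ncard := by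
  have hfin : (M '' T).Finite := hT.image M
  have hT_eq : T = ⋃ c ∈ M '' T, {z ∈ T | M z = c} := by
    ext z; simpa using fun hz => ⟨z, hz, rfl⟩
  calc T.ncard = ∑ᶠ c ∈ M '' T, {z ∈ T | M z = c}.ncard := by
        rw [← hfin.ncard_biUnion (fun _ _ => hT.subset (sep_subset _ _)), ← hT_eq]
        rintro c - c' - hcc'
        exact disjoint_left.2 fun z hz hz' => hcc' (hz.2.symm.trans hz'.2)
    _ ≤ ∑ᶠ c ∈ M '' T, (c \ D).ncard := by
        rw [finsum_mem_eq_finite_toFinset_sum _ hfin, finsum_mem_eq_finite_toFinset_sum _ hfin]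
        refine Finset.sum_le_sum fun c hc => ?_
        obtain ⟨y, hy, rfl⟩ := hfin.mem_toFinset.1 hc
        exact hfib y hy
    _ = ((⋃ y ∈ T, M y) \ D).ncard := by
        rw [← hfin.ncard_biUnion (fun _ _ => toFinite _)
          (hdisj.mono (g := (· \ D)) fun _ => sdiff_subset), biUnion_image]
        simp only [iUnion_sdiff]

def InducedIndep (b : Set α → ℤ) (X : Set α) : Prop :=
  ∀ Z ⊆ X, Z.Nonempty → (Z.ncard : ℤ) ≤ b Z

theorem InducedIndep.empty (b : Set α → ℤ) : InducedIndep b ∅ :=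
  fun _ hZ hne => absurd (subset_empty_iff.1 hZ) hne.ne_empty

theorem InducedIndep.subset (hX' : InducedIndep b X') (h : X ⊆ X') : InducedIndep b X :=
  fun Z hZ => hX' Z (hZ.trans h)

theorem union_le_of_forall_insert_le [Finite α]
    (hsub : ∀ X Y, b (X ∪ Y) + b (X ∩ Y) ≤ b X + b Y)
    (h : ∀ z ∈ K, b (insert z C) ≤ b C) : b (C ∪ K) ≤ b C := by
  induction K, toFinite K using Set.Finite.induction_on with
  | empty => rw [union_empty]
  | @insert z K hzK _ ih =>
    have ih := ih fun w hw => h w (mem_insert_of_mem z hw)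
    by_cases hzC : z ∈ C
    · rwa [union_insert, insert_eq_of_mem (mem_union_left K hzC)]
    have hunion : (C ∪ K) ∪ insert z C = C ∪ insert z K := by grind
    have hinter : (C ∪ K) ∩ insert z C = C := by grind
    have := hsub (C ∪ K) (insert z C)
    rw [hunion, hinter] at this
    linarith [h z (mem_insert z K)]

/-- For `y ∉ A` the inequality says `b (insert y A) < (insert y A).ncard`. -/
def IsBlocker (b : Set α → ℤ) (X : Set α) (y : α) (A : Set α) : Prop :=
  A ⊆ X ∧ A.Nonempty ∧ b (insert y A) ≤ A.ncard

theorem exists_isBlocker [Finite α] (hX : InducedIndep b X) (hb : 1 ≤ b {y})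
    (h : ¬ InducedIndep b (insert y X)) : ∃ A, IsBlocker b X y A := by
  simp only [InducedIndep, not_forall, not_le] at h
  obtain ⟨Z, hZ, hZne, hbZ⟩ := h
  have hyZ : y ∈ Z := by
    by_contra hyZ
    exact (hX Z ((subset_insert_iff_of_notMem hyZ).1 hZ) hZne).not_gt hbZ
  have hbA : b (insert y (Z \ {y})) ≤ (Z \ {y}).ncard := by
    rw [insert_sdiff_self_of_mem hyZ]
    have := ncard_sdiff_singleton_add_one hyZ
    omega
  refine ⟨Z \ {y}, sdiff_singleton_subset_iff.2 hZ, ?_, hbA⟩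
  by_contra hA
  rw [not_nonempty_iff_eq_empty.1 hA] at hbA
  simp only [insert_empty_eq, ncard_empty, Nat.cast_zero] at hbA
  omega

theorem IsBlocker.le_ncard (hmono : Monotone b) (hA : IsBlocker b X y A) : b A ≤ A.ncard :=
  (hmono (subset_insert y A)).trans hA.2.2

theorem IsBlocker.union [Finite α] (hsub : ∀ X Y, b (X ∪ Y) + b (X ∩ Y) ≤ b X + b Y)
    (hX : InducedIndep b X) (hy : y ∉ X) (hA : IsBlocker b X y A) (hBX : B ⊆ X)
    (hB : b B ≤ B.ncard) (hAB : (A ∩ B).Nonempty) : IsBlocker b X y (A ∪ B) := by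
  refine ⟨union_subset hA.1 hBX, hA.2.1.mono subset_union_left, ?_⟩
  have h := hsub (insert y A) B
  rw [insert_union, insert_inter_of_notMem fun h => hy (hBX h)] at h
  have hcard := ncard_union_add_ncard_inter A B
  have := hX _ (inter_subset_left.trans hA.1) hAB
  linarith [hA.2.2]

theorem subset_of_maximalFor_isBlocker [Finite α] (hmono : Monotone b)
    (hsub : ∀ X Y, b (X ∪ Y) + b (X ∩ Y) ≤ b X + b Y) (hX : InducedIndep b X) (hy : y ∉ X)
    {y' : α} {M M' : Set α} (hM : MaximalFor (IsBlocker b X y) ncard M)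
    (hM' : IsBlocker b X y' M') (hMM' : (M ∩ M').Nonempty) : M' ⊆ M := by
  have hU := hM.1.union hsub hX hy hM'.1 (hM'.le_ncard hmono) hMM'
  rw [eq_of_subset_of_ncard_le subset_union_left (hM.2 hU (ncard_le_ncard subset_union_left))]
  exact subset_union_right

theorem ncard_le_ncard_sdiff_of_union_le [Finite α] (hmono : Monotone b)
    (hX' : InducedIndep b X') (hKX' : K ⊆ X') (hCK : Disjoint C K) (h : b (C ∪ K) ≤ C.ncard) :
    K.ncard ≤ (C \ X').ncard := by
  obtain rfl | hK := K.eq_empty_or_nonempty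
  · simp
  have key : ((C ∩ X').ncard + K.ncard : ℤ) ≤ (C ∩ X').ncard + (C \ X').ncard :=
    calc ((C ∩ X').ncard + K.ncard : ℤ)
        = (C ∩ X' ∪ K).ncard := by
          rw [ncard_union_eq (hCK.mono_left inter_subset_left), Nat.cast_add]
      _ ≤ b (C ∩ X' ∪ K) :=
          hX' _ (union_subset inter_subset_right hKX') (hK.mono subset_union_right)
      _ ≤ b (C ∪ K) := hmono (union_subset_union_left K inter_subset_left)
      _ ≤ C.ncard := h
      _ = (C ∩ X').ncard + (C \ X').ncard := by
          rw [← Nat.cast_add, ncard_inter_add_ncard_sdiff_eq_ncard]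
  omega

theorem InducedIndep.ncard_fiber_le [Finite α] (hmono : Monotone b)
    (hsub : ∀ X Y, b (X ∪ Y) + b (X ∩ Y) ≤ b X + b Y) (hX : InducedIndep b X)
    (hX' : InducedIndep b X') {M : α → Set α} (hM : ∀ y ∈ X' \ X, IsBlocker b X y (M y))
    (hy : y ∈ X' \ X) : {z ∈ X' \ X | M z = M y}.ncard ≤ (M y \ X').ncard := by
  have hspan : ∀ z ∈ {z ∈ X' \ X | M z = M y}, b (insert z (M y)) ≤ b (M y) := by
    rintro z ⟨hz, hzy⟩
    rw [← hzy]
    exact (hM z hz).2.2.trans (hX _ (hM z hz).1 (hM z hz).2.1)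
  refine ncard_le_ncard_sdiff_of_union_le hmono hX' (fun z hz => hz.1.1) ?_
    ((union_le_of_forall_insert_le hsub hspan).trans ((hM y hy).le_ncard hmono))
  exact disjoint_left.2 fun z hzM hz => hz.1.2 ((hM y hy).1 hzM)

theorem InducedIndep.ncard_sdiff_le_of_forall_not_insert [Finite α] (hmono : Monotone b)
    (hsub : ∀ X Y, b (X ∪ Y) + b (X ∩ Y) ≤ b X + b Y) (hX : InducedIndep b X)
    (hX' : InducedIndep b X') (h : ∀ y ∈ X' \ X, ¬ InducedIndep b (insert y X)) :
    (X' \ X).ncard ≤ (X \ X').ncard := by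
  have hmax : ∀ y ∈ X' \ X, ∃ M, MaximalFor (IsBlocker b X y) ncard M := by
    intro y hy
    have hb : 1 ≤ b {y} := by
      simpa using hX' {y} (singleton_subset_iff.2 hy.1) (singleton_nonempty y)
    exact Finite.exists_maximalFor _ _ (toFinite _) (exists_isBlocker hX hb (h y hy))
  choose! M hM using hmax
  have hdisj : (M '' (X' \ X)).PairwiseDisjoint id := by
    rintro _ ⟨y, hy, rfl⟩ _ ⟨y', hy', rfl⟩ hne
    refine disjoint_iff_inter_eq_empty.2 (not_nonempty_iff_eq_empty.1 fun hMM' => hne ?_)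
    exact subset_antisymm
      (subset_of_maximalFor_isBlocker hmono hsub hX hy'.2 (hM y' hy') (hM y hy).1
        (inter_comm .. ▸ hMM'))
      (subset_of_maximalFor_isBlocker hmono hsub hX hy.2 (hM y hy) (hM y' hy').1 hMM')
  refine (ncard_le_ncard_biUnion_sdiff_of_fiber_le (toFinite _) X' hdisj
    fun y hy => hX.ncard_fiber_le hmono hsub hX' (fun z hz => (hM z hz).1) hy).trans ?_
  exact ncard_le_ncard (sdiff_subset_sdiff_left (iUnion₂_subset fun y hy => (hM y hy).1.1))

theorem InducedIndep.exists_insert_of_ncard_lt [Finite α] (hmono : Monotone b)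
    (hsub : ∀ X Y, b (X ∪ Y) + b (X ∩ Y) ≤ b X + b Y) (hX : InducedIndep b X)
    (hX' : InducedIndep b X') (hlt : X.ncard < X'.ncard) :
    ∃ y ∈ X' \ X, InducedIndep b (insert y X) := by
  by_contra! h
  have := hX.ncard_sdiff_le_of_forall_not_insert hmono hsub hX' h
  rw [ncard_lt_ncard_iff_ncard_sdiff_lt_ncard_sdiff] at hlt
  omega

theorem edmonds_induced_matroid_general
    {S : Type} [Fintype S]
    (b : Set S → ℤ)
    (hmono : ∀ X Y : Set S, X ⊆ Y → b X ≤ b Y)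
    (hsub : ∀ X Y : Set S, b (X ∪ Y) + b (X ∩ Y) ≤ b X + b Y) :
    (∀ Y : Set (Set S), Y = {X : Set S | ∀ Z ⊆ X, Z.Nonempty → (Z.ncard : ℤ) ≤ b Z} →
      ((∅ : Set S) ∈ Y ∧
       (∀ X X' : Set S, X ⊆ X' → X' ∈ Y → X ∈ Y) ∧
       (∀ X ∈ Y, ∀ X' ∈ Y, X.ncard < X'.ncard →
          ∃ y ∈ X' \ X, insert y X ∈ Y))) := by
  rintro _ rfl
  refine ⟨InducedIndep.empty b, fun _ _ h hX' => InducedIndep.subset hX' h, ?_⟩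
  exact fun _ hX _ hX' hlt =>
    InducedIndep.exists_insert_of_ncard_lt (fun X Y => hmono X Y) hsub hX hX' hlt

/-- Edmonds' theorem: a nonnegative (on nonempty sets), integer-valued, monotone,
submodular function induces a matroid whose independent sets are
`I_b = {X : b(Y) ≥ |Y| for all nonempty Y ⊆ X}`. -/
theorem edmonds_induced_matroid
    {S : Type} [Fintype S]
    (b : Set S → ℤ)
    (hmono : ∀ X Y : Set S, X ⊆ Y → b X ≤ b Y)
    (hsub : ∀ X Y : Set S, b (X ∪ Y) + b (X ∩ Y) ≤ b X + b Y)
    (hnonneg : ∀ X : Set S, X.Nonempty → 0 ≤ b X) :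
    (∀ Y : Set (Set S), Y = {X : Set S | ∀ Z ⊆ X, Z.Nonempty → (Z.ncard : ℤ) ≤ b Z} →
      ((∅ : Set S) ∈ Y ∧
       (∀ X X' : Set S, X ⊆ X' → X' ∈ Y → X ∈ Y) ∧
       (∀ X ∈ Y, ∀ X' ∈ Y, X.ncard < X'.ncard →
          ∃ y ∈ X' \ X, insert y X ∈ Y))) :=
  edmonds_induced_matroid_general b hmono hsub
end

section
/- Let (H=(V∪R, A∪E), M=(R,r_M)) be a matroid-rooted mixed hypergraph, {B_r}_{r∈R} a matroid-reachability-based packing of mixed hyperarborescences (with trimmed r-arborescences B_r), let C be a strongly connected component of H−R, and let {X^i}_{i=1}^ℓ be a biset subpartition of C with X_W^i = P^H_{X_W^i} for all i. Then e_E({X_I^i}_1^ℓ) + Σ_{i=1}^ℓ d_A^-(X^i) ≥ Σ_{i=1}^ℓ ( r_M(P^H_C∩R) − r_M(X_W^i∩R) ). -/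
/-!
Fix `v_i ∈ X_I^i`. As `C` is strongly connected, `P^H_C = P^H_{v_i}`, so the roots whose trimmed
arborescence contains `v_i` form a basis of `P^H_C ∩ R`, and at least
`r_M(P^H_C ∩ R) − r_M(X_W^i ∩ R)` of them lie outside the wall. For each such root `r`, the path
from `r` to `v_i` in `B_r` enters `X_I^i` by an arc whose tail is outside `X_O^i`, because the wall
is closed under `P^H`. Distinct pairs `(i, r)` give distinct arcs: the dyperedges among them are
counted by `d_A^-(X^i)`, and a hyperedge, lying in a single arborescence, is counted once by `e_E`.
-/

open Set

/-- One step of a mixed hyperpath: along a dyperedge from a tail vertex to the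
head, or between two distinct vertices of a hyperedge. -/
def stepH {α δ ε : Type} (hdD : δ → α) (tlD : δ → Set α) (vE : ε → Set α)
    (u v : α) : Prop :=
  (∃ a : δ, u ∈ tlD a ∧ v = hdD a) ∨ (∃ e : ε, u ∈ vE e ∧ v ∈ vE e ∧ u ≠ v)

def reachH {α δ ε : Type} (hdD : δ → α) (tlD : δ → Set α) (vE : ε → Set α)
    (u v : α) : Prop :=
  Relation.ReflTransGen (stepH hdD tlD vE) u v

/-- `P_X^H`. -/
def PH {α δ ε : Type} (hdD : δ → α) (tlD : δ → Set α) (vE : ε → Set α)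
    (X : Set α) : Set α :=
  {v | ∃ x ∈ X, reachH hdD tlD vE v x}

/-- One step of a mixed hyperpath in `H − R` (all vertices of `R` deleted). -/
def stepHR {α δ ε : Type} (hdD : δ → α) (tlD : δ → Set α) (vE : ε → Set α)
    (R : Set α) (u v : α) : Prop :=
  u ∉ R ∧ v ∉ R ∧
    ((∃ a : δ, u ∈ tlD a ∧ v = hdD a ∧ tlD a ∩ R = ∅) ∨
     (∃ e : ε, u ∈ vE e ∧ v ∈ vE e ∧ u ≠ v ∧ vE e ∩ R = ∅))

def reachHR {α δ ε : Type} (hdD : δ → α) (tlD : δ → Set α) (vE : ε → Set α)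
    (R : Set α) (u v : α) : Prop :=
  Relation.ReflTransGen (stepHR hdD tlD vE R) u v

/-- The sets `(BA, BE)` of dyperedges and hyperedges trim, via the choices
`fA` (a tail vertex for each dyperedge) and `fE` (an ordered pair of distinct
vertices for each hyperedge), to an `r`-arborescence. -/
noncomputable def TrimsToArbor {α δ ε : Type} (hdD : δ → α) (tlD : δ → Set α)
    (vE : ε → Set α) (BA : Set δ) (BE : Set ε) (r : α)
    (fA : δ → α) (fE : ε → α × α) : Prop :=
  (∀ a ∈ BA, fA a ∈ tlD a) ∧
  (∀ e ∈ BE, (fE e).1 ∈ vE e ∧ (fE e).2 ∈ vE e ∧ (fE e).1 ≠ (fE e).2) ∧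
  IsArbor (Sum.elim fA (fun e => (fE e).1)) (Sum.elim hdD (fun e => (fE e).2))
    (Sum.inl '' BA ∪ Sum.inr '' BE) r

/-- `V(B_r)`. -/
def trimVerts {α δ ε : Type} (hdD : δ → α)
    (BA : Set δ) (BE : Set ε) (r : α) (fA : δ → α) (fE : ε → α × α) : Set α :=
  vertsOf (Sum.elim fA (fun e => (fE e).1)) (Sum.elim hdD (fun e => (fE e).2))
    (Sum.inl '' BA ∪ Sum.inr '' BE) r

/-- `d_A^-(X)` for the biset `X = (X_O, X_I)`. -/
noncomputable def dInBiset {α δ : Type} (hdD : δ → α) (tlD : δ → Set α)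
    (XO XI : Set α) : ℕ :=
  {a : δ | hdD a ∈ XI ∧ ¬ tlD a ⊆ XO}.ncard

/-- `e_E({X_I^i})`. -/
noncomputable def eEnter {α ε : Type} (vE : ε → Set α) {ℓ : ℕ}
    (XI : Fin ℓ → Set α) : ℕ :=
  {e : ε | ∃ i, (vE e ∩ XI i).Nonempty ∧ (vE e \ XI i).Nonempty}.ncard

namespace RankFn

variable {α : Type} (M : RankFn α)

theorem rk_union_le_add_ncard_s13 (X : Set α) {S : Set α} (hS : S.Finite) :
    M.rk (X ∪ S) ≤ M.rk X + S.ncard := by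
  induction S, hS using Set.Finite.induction_on with
  | empty => simp
  | @insert a s ha hs ih =>
    rw [union_insert, ncard_insert_of_notMem ha hs]
    calc M.rk (insert a (X ∪ s)) ≤ M.rk (X ∪ s) + 1 := M.unit _ _
      _ ≤ M.rk X + s.ncard + 1 := by omega

theorem rk_le_rk_add_ncard_diff {X Y : Set α} (h : (X \ Y).Finite) :
    M.rk X ≤ M.rk Y + (X \ Y).ncard :=
  (M.mono _ _ (by simp)).trans (M.rk_union_le_add_ncard_s13 Y h)

end RankFn

theorem Relation.ReflTransGen.exists_step_into {β : Type} {r : β → β → Prop} {S : Set β}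
    {u v : β} (h : Relation.ReflTransGen r u v) (hv : v ∈ S) (hu : u ∉ S) :
    ∃ x y, Relation.ReflTransGen r u x ∧ r x y ∧ x ∉ S ∧ y ∈ S := by
  induction h with
  | refl => exact absurd hv hu
  | @tail w y huw hwy ih =>
    by_cases hw : w ∈ S
    · exact ih hw
    · exact ⟨w, y, huw, hwy, hw, hv⟩

theorem Set.finite_and_ncard_le_of_pairwiseDisjoint_of_inter_nonempty {ι β : Type} [Finite β]
    {K : Set ι} {A : ι → Set β} {T : Set β} (hdisj : K.PairwiseDisjoint A)
    (hmeet : ∀ r ∈ K, (A r ∩ T).Nonempty) : K.Finite ∧ K.ncard ≤ T.ncard := by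
  choose f hfA hfT using fun r : K => hmeet r r.2
  have hinj : Function.Injective fun r : K => (⟨f r, hfT r⟩ : T) := fun r r' h => by
    have hf : f r = f r' := congrArg Subtype.val h
    exact Subtype.ext <| hdisj.elim r.2 r'.2 <| not_disjoint_iff.mpr ⟨f r, hfA r, hf ▸ hfA r'⟩
  have : Finite K := Finite.of_injective _ hinj
  exact ⟨K.toFinite, Nat.card_le_card_of_injective _ hinj⟩

section MixedHypergraph

variable {α δ ε : Type} {hdD : δ → α} {tlD : δ → Set α} {vE : ε → Set α}

theorem reachH_of_reachHR {R : Set α} {u v : α} (h : reachHR hdD tlD vE R u v) :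
    reachH hdD tlD vE u v := by
  refine Relation.ReflTransGen.mono ?_ u v h
  rintro x y ⟨-, -, ⟨a, ha, rfl, -⟩ | ⟨e, h1, h2, h3, -⟩⟩
  · exact Or.inl ⟨a, ha, rfl⟩
  · exact Or.inr ⟨e, h1, h2, h3⟩

theorem PH_eq_PH_singleton {C : Set α} {v : α} (hv : v ∈ C)
    (hreach : ∀ x ∈ C, reachH hdD tlD vE x v) : PH hdD tlD vE C = PH hdD tlD vE {v} := by
  ext u
  constructor
  · rintro ⟨x, hx, hux⟩
    exact ⟨v, rfl, hux.trans (hreach x hx)⟩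
  · rintro ⟨x, rfl, hux⟩
    exact ⟨x, hv, hux⟩

variable {BA : Set δ} {BE : Set ε} {fA : δ → α} {fE : ε → α × α}

theorem reachH_of_reachOn_trim (hfA : ∀ a ∈ BA, fA a ∈ tlD a)
    (hfE : ∀ e ∈ BE, (fE e).1 ∈ vE e ∧ (fE e).2 ∈ vE e ∧ (fE e).1 ≠ (fE e).2) {u v : α}
    (h : reachOn (Sum.elim fA (fun e => (fE e).1)) (Sum.elim hdD (fun e => (fE e).2))
      (Sum.inl '' BA ∪ Sum.inr '' BE) u v) :
    reachH hdD tlD vE u v := by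
  refine Relation.ReflTransGen.mono ?_ u v h
  rintro x y ⟨b, ⟨a, ha, rfl⟩ | ⟨e, he, rfl⟩, rfl, rfl⟩
  · exact Or.inl ⟨a, hfA a ha, rfl⟩
  · obtain ⟨h1, h2, h3⟩ := hfE e he
    exact Or.inr ⟨e, h1, h2, h3⟩

/-- The last arc of the trimmed path from `r` that enters `X_I` has its tail outside `X_O`:
otherwise the tail lies in the wall and `r ∈ P^H` of the wall, which is the wall itself. -/
theorem TrimsToArbor.exists_arc_entering {r v : α} {XO XI : Set α}
    (htrim : TrimsToArbor hdD tlD vE BA BE r fA fE)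
    (hclosed : PH hdD tlD vE (XO \ XI) = XO \ XI) (hv : v ∈ XI)
    (hvB : v ∈ trimVerts hdD BA BE r fA fE) (hrI : r ∉ XI) (hrW : r ∉ XO \ XI) :
    (∃ a ∈ BA, hdD a ∈ XI ∧ ¬ tlD a ⊆ XO) ∨ (∃ e ∈ BE, (fE e).2 ∈ XI ∧ (fE e).1 ∉ XI) := by
  obtain ⟨hfA, hfE, harb⟩ := htrim
  obtain ⟨x, y, hrx, ⟨b, hb, rfl, rfl⟩, hxI, hyI⟩ :=
    (harb.2.2 v hvB).exists_step_into hv hrI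
  have hxO : Sum.elim fA (fun e => (fE e).1) b ∉ XO := fun hxO =>
    hrW (hclosed ▸ ⟨_, ⟨hxO, hxI⟩, reachH_of_reachOn_trim hfA hfE hrx⟩)
  rcases hb with ⟨a, ha, rfl⟩ | ⟨e, he, rfl⟩
  · exact Or.inl ⟨a, ha, hyI, fun h => hxO (h (hfA a ha))⟩
  · exact Or.inr ⟨e, he, hyI, hxI⟩

end MixedHypergraph

theorem Set.disjoint_image_inl_union_image_inr {β γ : Type} {s s' : Set β} {t t' : Set γ}
    (hs : Disjoint s s') (ht : Disjoint t t') :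
    Disjoint (Sum.inl '' s ∪ Sum.inr '' t) (Sum.inl '' s' ∪ Sum.inr '' t') := by
  simp only [disjoint_union_left, disjoint_union_right,
    disjoint_image_iff Sum.inl_injective, disjoint_image_iff Sum.inr_injective]
  exact ⟨⟨hs, disjoint_image_inl_image_inr.symm⟩, disjoint_image_inl_image_inr, ht⟩

theorem Set.ncard_image_inl_union_image_inr {β γ : Type} [Finite β] [Finite γ] (s : Set β)
    (t : Set γ) : (Sum.inl '' s ∪ Sum.inr '' t).ncard = s.ncard + t.ncard := by
  rw [ncard_union_eq disjoint_image_inl_image_inr, ncard_image_of_injective _ Sum.inl_injective,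
    ncard_image_of_injective _ Sum.inr_injective]

def trimEnteringHyperedges {α ε : Type} (R : Set α) (BE : α → Set ε) (fE : α → ε → α × α)
    (XI : Set α) : Set ε :=
  {e | ∃ r ∈ R, e ∈ BE r ∧ (fE r e).2 ∈ XI ∧ (fE r e).1 ∉ XI}

section Packing

variable {α δ ε : Type} {hdD : δ → α} {tlD : δ → Set α} {vE : ε → Set α} {R : Set α}
  {BA : α → Set δ} {BE : α → Set ε} {fA : α → δ → α} {fE : α → ε → α × α}

/-- The roots of the basis at `v` outside the wall own pairwise distinct arcs entering `X`, since
their arborescences are disjoint. -/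
theorem rk_PH_le_rk_wall_add_entering [Finite δ] [Finite ε] {M : RankFn α}
    (hdisjA : ∀ r ∈ R, ∀ r' ∈ R, r ≠ r' → Disjoint (BA r) (BA r'))
    (hdisjE : ∀ r ∈ R, ∀ r' ∈ R, r ≠ r' → Disjoint (BE r) (BE r'))
    (htrim : ∀ r ∈ R, TrimsToArbor hdD tlD vE (BA r) (BE r) r (fA r) (fE r))
    {v : α} {XO XI : Set α}
    (hbasis : IsBasisOf M {r ∈ R | v ∈ trimVerts hdD (BA r) (BE r) r (fA r) (fE r)}
      (PH hdD tlD vE {v} ∩ R))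
    (hv : v ∈ XI) (hXIR : Disjoint XI R) (hclosed : PH hdD tlD vE (XO \ XI) = XO \ XI) :
    M.rk (PH hdD tlD vE {v} ∩ R) ≤ M.rk ((XO \ XI) ∩ R) + dInBiset hdD tlD XO XI
      + (trimEnteringHyperedges R BE fE XI).ncard := by
  set B := {r ∈ R | v ∈ trimVerts hdD (BA r) (BE r) r (fA r) (fE r)}
  set D := {a : δ | hdD a ∈ XI ∧ ¬ tlD a ⊆ XO}
  set E := trimEnteringHyperedges R BE fE XI
  have hmeet : ∀ r ∈ B \ ((XO \ XI) ∩ R),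
      ((Sum.inl '' BA r ∪ Sum.inr '' BE r) ∩ (Sum.inl '' D ∪ Sum.inr '' E)).Nonempty := by
    rintro r ⟨⟨hrR, hvr⟩, hrW⟩
    rcases (htrim r hrR).exists_arc_entering hclosed hv hvr (hXIR.notMem_of_mem_right hrR)
      (fun h => hrW ⟨h, hrR⟩) with ⟨a, ha, hD⟩ | ⟨e, he, hE⟩
    · exact ⟨Sum.inl a, Or.inl (mem_image_of_mem _ ha), Or.inl (mem_image_of_mem _ hD)⟩
    · exact ⟨Sum.inr e, Or.inr (mem_image_of_mem _ he), Or.inr ⟨e, ⟨r, hrR, he, hE⟩, rfl⟩⟩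
  have hdisj : (B \ ((XO \ XI) ∩ R)).PairwiseDisjoint
      fun r => Sum.inl '' BA r ∪ Sum.inr '' BE r := fun r hr r' hr' hne =>
    disjoint_image_inl_union_image_inr (hdisjA r hr.1.1 r' hr'.1.1 hne)
      (hdisjE r hr.1.1 r' hr'.1.1 hne)
  obtain ⟨hfin, hcard⟩ := finite_and_ncard_le_of_pairwiseDisjoint_of_inter_nonempty hdisj hmeet
  have hDE : (Sum.inl '' D ∪ Sum.inr '' E).ncard = dInBiset hdD tlD XO XI + E.ncard :=
    ncard_image_inl_union_image_inr D E
  calc M.rk (PH hdD tlD vE {v} ∩ R) = M.rk B := hbasis.2.2.symm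
    _ ≤ M.rk ((XO \ XI) ∩ R) + (B \ ((XO \ XI) ∩ R)).ncard := M.rk_le_rk_add_ncard_diff hfin
    _ ≤ _ := by omega

/-- A hyperedge lies in the arborescence of only one root and its trimmed head lies in only one
`X_I^i`, so the sets counted for different `i` are disjoint. -/
theorem sum_ncard_trimEnteringHyperedges_le [Finite ε] {ℓ : ℕ} {XI : Fin ℓ → Set α}
    (hdisjE : ∀ r ∈ R, ∀ r' ∈ R, r ≠ r' → Disjoint (BE r) (BE r'))
    (hfE : ∀ r ∈ R, ∀ e ∈ BE r, (fE r e).1 ∈ vE e ∧ (fE r e).2 ∈ vE e)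
    (hdisjI : ∀ i j, i ≠ j → Disjoint (XI i) (XI j)) :
    ∑ i, (trimEnteringHyperedges R BE fE (XI i)).ncard ≤ eEnter vE XI := by
  have hdisj :
      Pairwise (Function.onFun Disjoint fun i => trimEnteringHyperedges R BE fE (XI i)) := by
    intro i j hij
    refine disjoint_left.mpr ?_
    rintro e ⟨r, hr, he, hi, -⟩ ⟨r', hr', he', hj, -⟩
    obtain rfl : r = r' := by_contra fun hne => disjoint_left.mp (hdisjE r hr r' hr' hne) he he'
    exact disjoint_left.mp (hdisjI i j hij) hi hj
  have hsub : (⋃ i, trimEnteringHyperedges R BE fE (XI i)) ⊆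
      {e | ∃ i, (vE e ∩ XI i).Nonempty ∧ (vE e \ XI i).Nonempty} := by
    rintro e ⟨-, ⟨i, rfl⟩, r, hr, he, hhead, htail⟩
    obtain ⟨h1, h2⟩ := hfE r hr e he
    exact ⟨i, ⟨_, h2, hhead⟩, ⟨_, h1, htail⟩⟩
  rw [← finsum_eq_sum_of_fintype, ← ncard_iUnion_of_finite (fun _ => toFinite _) hdisj]
  exact ncard_le_ncard hsub

end Packing

theorem mixed_hyper_reachability_necessity_general
    {α δ ε : Type} [Fintype δ] [Fintype ε]
    (V R : Set α) (hdD : δ → α) (tlD : δ → Set α) (vE : ε → Set α)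
    (hdisj : Disjoint V R)
    (M : RankFn α)
    (BA : α → Set δ) (BE : α → Set ε)
    (fA : α → δ → α) (fE : α → ε → α × α)
    (hdisjA : ∀ r ∈ R, ∀ r' ∈ R, r ≠ r' → Disjoint (BA r) (BA r'))
    (hdisjE : ∀ r ∈ R, ∀ r' ∈ R, r ≠ r' → Disjoint (BE r) (BE r'))
    (htrim : ∀ r ∈ R, TrimsToArbor hdD tlD vE (BA r) (BE r) r (fA r) (fE r))
    (hbasis : ∀ v ∈ V, IsBasisOf M
      {r ∈ R | v ∈ trimVerts hdD (BA r) (BE r) r (fA r) (fE r)}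
      (PH hdD tlD vE {v} ∩ R))
    (C : Set α) (hCV : C ⊆ V)
    (hscc : ∀ u ∈ C, ∀ v ∈ C, reachHR hdD tlD vE R u v)
    (ℓ : ℕ) (XO XI : Fin ℓ → Set α)
    (hne : ∀ i, (XI i).Nonempty)
    (hinC : ∀ i, XI i ⊆ C)
    (hdisjI : ∀ i j, i ≠ j → Disjoint (XI i) (XI j))
    (hclosed : ∀ i, PH hdD tlD vE (XO i \ XI i) = XO i \ XI i) :
    (eEnter vE XI : ℤ) + ∑ i : Fin ℓ, (dInBiset hdD tlD (XO i) (XI i) : ℤ)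
      ≥ ∑ i : Fin ℓ, ((M.rk (PH hdD tlD vE C ∩ R) : ℤ)
          - (M.rk ((XO i \ XI i) ∩ R) : ℤ)) := by
  choose v hv using hne
  have hvC i : v i ∈ C := hinC i (hv i)
  have hrank i : M.rk (PH hdD tlD vE C ∩ R) ≤ M.rk ((XO i \ XI i) ∩ R)
      + dInBiset hdD tlD (XO i) (XI i) + (trimEnteringHyperedges R BE fE (XI i)).ncard := by
    rw [PH_eq_PH_singleton (hvC i) fun x hx => reachH_of_reachHR (hscc x hx _ (hvC i))]
    exact rk_PH_le_rk_wall_add_entering hdisjA hdisjE htrim (hbasis _ (hCV (hvC i))) (hv i)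
      (hdisj.mono_left ((hinC i).trans hCV)) (hclosed i)
  have hhyper := sum_ncard_trimEnteringHyperedges_le hdisjE
    (fun r hr e he => ((htrim r hr).2.1 e he).imp_right And.left) hdisjI
  have hsum := Finset.sum_le_sum fun i (_ : i ∈ Finset.univ) => hrank i
  rw [Finset.sum_add_distrib, Finset.sum_add_distrib] at hsum
  zify at hsum hhyper
  rw [ge_iff_le, Finset.sum_sub_distrib]
  omega

/-- Necessity direction of the main theorem: a matroid-reachability-based packing
of mixed hyperarborescences satisfies the biset cut condition. -/
theorem mixed_hyper_reachability_necessity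
    {α δ ε : Type} [Fintype α] [Fintype δ] [Fintype ε]
    (V R : Set α) (hdD : δ → α) (tlD : δ → Set α) (vE : ε → Set α)
    (hpart : V ∪ R = Set.univ) (hdisj : Disjoint V R)
    (htail : ∀ a : δ, (tlD a).Nonempty)
    (hheadtail : ∀ a : δ, hdD a ∉ tlD a)
    (hhyp2 : ∀ e : ε, 2 ≤ (vE e).ncard)
    (hrootA : ∀ a : δ, hdD a ∉ R)
    (hrootE : ∀ e : ε, vE e ∩ R = ∅)
    (hleave : ∀ a : δ, ∀ r ∈ R, r ∈ tlD a → tlD a = {r})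
    (M : RankFn α)
    (BA : α → Set δ) (BE : α → Set ε)
    (fA : α → δ → α) (fE : α → ε → α × α)
    (hdisjA : ∀ r ∈ R, ∀ r' ∈ R, r ≠ r' → Disjoint (BA r) (BA r'))
    (hdisjE : ∀ r ∈ R, ∀ r' ∈ R, r ≠ r' → Disjoint (BE r) (BE r'))
    (htrim : ∀ r ∈ R, TrimsToArbor hdD tlD vE (BA r) (BE r) r (fA r) (fE r))
    (hbasis : ∀ v ∈ V, IsBasisOf M
      {r ∈ R | v ∈ trimVerts hdD (BA r) (BE r) r (fA r) (fE r)}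
      (PH hdD tlD vE {v} ∩ R))
    (C : Set α) (hCV : C ⊆ V) (hCne : C.Nonempty)
    (hscc : ∀ u ∈ C, ∀ v ∈ C, reachHR hdD tlD vE R u v)
    (hmax : ∀ u v : α, v ∈ C → u ∉ R →
      reachHR hdD tlD vE R u v → reachHR hdD tlD vE R v u → u ∈ C)
    (ℓ : ℕ) (XO XI : Fin ℓ → Set α)
    (hsub : ∀ i, XI i ⊆ XO i)
    (hne : ∀ i, (XI i).Nonempty)
    (hinC : ∀ i, XI i ⊆ C)
    (hdisjI : ∀ i j, i ≠ j → Disjoint (XI i) (XI j))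
    (hwall : ∀ i, (XO i \ XI i) ∩ C = ∅)
    (hclosed : ∀ i, PH hdD tlD vE (XO i \ XI i) = XO i \ XI i) :
    (eEnter vE XI : ℤ) + ∑ i : Fin ℓ, (dInBiset hdD tlD (XO i) (XI i) : ℤ)
      ≥ ∑ i : Fin ℓ, ((M.rk (PH hdD tlD vE C ∩ R) : ℤ)
          - (M.rk ((XO i \ XI i) ∩ R) : ℤ)) :=
  mixed_hyper_reachability_necessity_general V R hdD tlD vE hdisj M BA BE fA fE hdisjA hdisjE htrim
    hbasis C hCV hscc ℓ XO XI hne hinC hdisjI hclosed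
end
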